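/- arXiv:2207.07417 — 3 statements merged into one kernel-verified Lean document; each statement's English description precedes it below -/
import Mathlib

section
/- There is an absolute constant C > 0 such that the following holds. Let ε, δ ∈ (0,1) and let S ∈ ℝ^{r×n} be a Countsketch matrix with r ≥ C/(ε²δ). Then the distribution of S has the (ε, δ, 2)-JL moment property, i.e., for every unit vector x ∈ ℝ^n, E[(‖Sx‖₂² − 1)²] ≤ ε²δ. -/
open MeasureTheory ProbabilityTheory Matrix

/-- Squared Euclidean norm of a vector. -/
noncomputable def vecNormSq {n : Type*} [Fintype n] (v : n → ℝ) : ℝ := ∑ i, (v i) ^ 2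

/-- A random matrix `S` has the `(ε, δ, ℓ)`-JL moment property if for every unit vector `x`,
`E[|‖Sx‖₂² − 1|^ℓ] ≤ ε^ℓ·δ`. -/
def JLMoment {Ω : Type*} [MeasurableSpace Ω] (μ : Measure Ω) {m n : Type*} [Fintype m]
    [Fintype n] (S : Ω → Matrix m n ℝ) (ε δ : ℝ) (ℓ : ℕ) : Prop :=
  ∀ x : n → ℝ, vecNormSq x = 1 →
    ∫ ω, |vecNormSq ((S ω).mulVec x) - 1| ^ ℓ ∂μ ≤ ε ^ ℓ * δ

/-- `S : Ω → ℝ^{r×n}` is a Countsketch matrix: the columns are independent, and in each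
column a uniformly random entry is set to a uniformly random sign, all other entries
being `0`. -/
def IsCountsketch {Ω : Type*} [MeasurableSpace Ω] (μ : Measure Ω) {r n : ℕ}
    (S : Ω → Matrix (Fin r) (Fin n) ℝ) : Prop :=
  ∃ (row : Ω → Fin n → Fin r) (sign : Ω → Fin n → ℝ),
    (∀ ω i j, S ω i j = if row ω j = i then sign ω j else 0) ∧
    iIndepFun (fun j ω => (row ω j, sign ω j)) μ ∧
    (∀ ω j, sign ω j = 1 ∨ sign ω j = -1) ∧
    (∀ (j : Fin n) (i : Fin r) (s : ℝ), s = 1 ∨ s = -1 →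
      μ {ω | row ω j = i ∧ sign ω j = s} = 1 / (2 * (r : ENNReal)))

/-!
If column `j` of `S` has its nonzero entry `σ j` in row `h j`, then
`‖Sx‖² - ‖x‖² = ∑_{j ≠ k} [h j = h k] x_j x_k σ_j σ_k`. Averaged over the signs, the square of this
chaos keeps only the products of a pair `(j, k)` with itself and with `(k, j)`; averaged over the
hash, `[h j = h k]` becomes `1 / r`. Hence `E[(‖Sx‖² - 1)²] = (2 / r) ∑_{j ≠ k} x_j² x_k² ≤ 2 / r`,
and `C = 2` works.

Independence is only assumed for the column maps, which need not be measurable, so the expectation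
is computed as a finite average over the values of `(h, σ)`: their fibres have outer measures
summing to `1`, which forces them to be null-measurable.
-/

open Finset

noncomputable def boolSign (b : Bool) : ℝ := if b then 1 else -1

lemma boolSign_mul_self (b : Bool) : boolSign b * boolSign b = 1 := by
  cases b <;> norm_num [boolSign]

lemma boolSign_not (b : Bool) : boolSign (!b) = -boolSign b := by
  cases b <;> simp [boolSign]

lemma boolSign_injective : Function.Injective boolSign := by
  intro b c; cases b <;> cases c <;> norm_num [boolSign]

lemma boolSign_decide_eq_one {s : ℝ} (hs : s = 1 ∨ s = -1) : boolSign (decide (s = 1)) = s := by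
  rcases hs with rfl | rfl <;> norm_num [boolSign]

section Signs
variable {ι : Type*} [Fintype ι] [DecidableEq ι]

lemma sum_boolSign_mul_eq_zero {i k l m : ι} (hk : k ≠ i) (hl : l ≠ i) (hm : m ≠ i) :
    ∑ b : ι → Bool, boolSign (b i) * boolSign (b k) * (boolSign (b l) * boolSign (b m)) = 0 := by
  have hflip : Function.Involutive fun b : ι → Bool => Function.update b i (!b i) := fun b => by
    ext u; by_cases hu : u = i <;> simp [hu]
  set f : (ι → Bool) → ℝ :=
    fun b => boolSign (b i) * boolSign (b k) * (boolSign (b l) * boolSign (b m))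
  -- flipping the sign at the index `i`, which occurs only once, negates the summand
  have hsum := Fintype.sum_equiv hflip.toPerm f (fun b => -f b) fun b => by
    simp [f, Function.Involutive.coe_toPerm, Function.update_of_ne hk, Function.update_of_ne hl,
      Function.update_of_ne hm, boolSign_not]
  rw [sum_neg_distrib] at hsum
  linarith

lemma sum_boolSign_offDiag_mul {p q : ι × ι} (hp : p.1 ≠ p.2) (hq : q.1 ≠ q.2) :
    ∑ b : ι → Bool, boolSign (b p.1) * boolSign (b p.2) * (boolSign (b q.1) * boolSign (b q.2)) =
      if q = p ∨ q = p.swap then 2 ^ Fintype.card ι else 0 := by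
  obtain ⟨j, k⟩ := p
  obtain ⟨l, m⟩ := q
  dsimp only at hp hq ⊢
  split_ifs with hmatch
  · have hone : ∀ b : ι → Bool,
        boolSign (b j) * boolSign (b k) * (boolSign (b l) * boolSign (b m)) = 1 := by
      intro b
      rcases hmatch with h | h <;> simp only [Prod.mk.injEq, Prod.swap_prod_mk] at h <;>
        rw [h.1, h.2] <;>
        linear_combination (boolSign (b k) * boolSign (b k)) * boolSign_mul_self (b j) +
          boolSign_mul_self (b k)
    simp [hone]
  · simp only [Prod.mk.injEq, Prod.swap_prod_mk, not_or, not_and] at hmatch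
    -- one of `j`, `k` occurs only once among `j, k, l, m`
    by_cases hj : j ≠ l ∧ j ≠ m
    · exact sum_boolSign_mul_eq_zero hp.symm (Ne.symm hj.1) (Ne.symm hj.2)
    · have hkl : k ≠ l := fun h => by grind
      have hkm : k ≠ m := fun h => by grind
      rw [← sum_boolSign_mul_eq_zero hp (Ne.symm hkl) (Ne.symm hkm)]
      exact sum_congr rfl fun b _ => by ring

lemma sum_sq_sum_offDiag_boolSign (a : ι × ι → ℝ) :
    ∑ b : ι → Bool, (∑ p ∈ univ.offDiag, a p * (boolSign (b p.1) * boolSign (b p.2))) ^ 2 =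
      2 ^ Fintype.card ι * ∑ p ∈ univ.offDiag, a p * (a p + a p.swap) := by
  have hpair : ∀ p ∈ (univ : Finset ι).offDiag,
      ∑ q ∈ univ.offDiag, a p * a q *
        ∑ b : ι → Bool, boolSign (b p.1) * boolSign (b p.2) * (boolSign (b q.1) * boolSign (b q.2))
        = 2 ^ Fintype.card ι * (a p * (a p + a p.swap)) := by
    intro p hp
    have hp' : p.1 ≠ p.2 := (mem_offDiag.1 hp).2.2
    have hswap : p.swap ∈ (univ : Finset ι).offDiag := by simpa [mem_offDiag] using hp'.symm
    have hne : p.swap ≠ p := fun h => hp' (congrArg Prod.snd h)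
    have hsplit : ∀ q : ι × ι, (if q = p ∨ q = p.swap then (2 : ℝ) ^ Fintype.card ι else 0) =
        (if q = p then 2 ^ Fintype.card ι else 0) +
          (if q = p.swap then 2 ^ Fintype.card ι else 0) := by
      intro q
      by_cases h : q = p
      · simp [h, hne.symm]
      · simp [h]
    rw [sum_congr rfl fun q hq => by
      rw [sum_boolSign_offDiag_mul hp' (mem_offDiag.1 hq).2.2, hsplit]]
    simp only [mul_add, mul_ite, mul_zero, sum_add_distrib, sum_ite_eq', hp, hswap, if_true]
    ring
  calc ∑ b : ι → Bool, (∑ p ∈ univ.offDiag, a p * (boolSign (b p.1) * boolSign (b p.2))) ^ 2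
      = ∑ p ∈ univ.offDiag, ∑ q ∈ univ.offDiag, a p * a q *
          ∑ b : ι → Bool, boolSign (b p.1) * boolSign (b p.2) *
            (boolSign (b q.1) * boolSign (b q.2)) := by
        simp_rw [sq, sum_mul_sum, mul_sum]
        rw [sum_comm]
        refine sum_congr rfl fun p _ => ?_
        rw [sum_comm]
        exact sum_congr rfl fun q _ => sum_congr rfl fun b _ => by ring
    _ = 2 ^ Fintype.card ι * ∑ p ∈ univ.offDiag, a p * (a p + a p.swap) := by
        rw [sum_congr rfl hpair, mul_sum]

end Signs

section Countsketch
variable {ι κ : Type*} [Fintype ι] [DecidableEq ι] [Fintype κ] [DecidableEq κ]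

lemma card_filter_apply_eq_apply {j k : ι} (hjk : j ≠ k) :
    #{h : ι → κ | h j = h k} = Fintype.card κ ^ (Fintype.card ι - 1) := by
  let e : {h : ι → κ // h j = h k} ≃ ({u : ι // u ≠ k} → κ) :=
    { toFun := fun h u => h.1 u
      invFun := fun g => ⟨fun u => if hu : u = k then g ⟨j, hjk⟩ else g ⟨u, hu⟩, by simp [hjk]⟩
      left_inv := fun h => by
        ext u
        by_cases hu : u = k
        · subst hu; simp [h.2]
        · simp [hu]
      right_inv := fun g => by ext u; simp [u.2] }
  rw [← Fintype.card_subtype, Fintype.card_congr e, Fintype.card_fun,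
    Fintype.card_subtype_compl, Fintype.card_subtype_eq]

def countsketchMatrix (h : ι → κ) (s : ι → ℝ) : Matrix κ ι ℝ :=
  Matrix.of fun i j => if h j = i then s j else 0

lemma vecNormSq_countsketchMatrix_mulVec_sub (h : ι → κ) {s : ι → ℝ} (hs : ∀ j, s j * s j = 1)
    (x : ι → ℝ) :
    vecNormSq (countsketchMatrix h s *ᵥ x) - vecNormSq x =
      ∑ p ∈ univ.offDiag, (if h p.1 = h p.2 then x p.1 * x p.2 else 0) * (s p.1 * s p.2) := by
  have hpair : ∀ j k : ι, ∑ i, (countsketchMatrix h s i j * x j) * (countsketchMatrix h s i k * x k)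
      = (if h j = h k then x j * x k else 0) * (s j * s k) := by
    intro j k
    by_cases hjk : h j = h k
    · simp [countsketchMatrix, hjk, ite_mul, eq_comm]
      ring
    · simp [countsketchMatrix, hjk, ite_mul, eq_comm]
  have hdiag : ∑ j, (if h j = h j then x j * x j else 0) * (s j * s j) = vecNormSq x := by
    simp [vecNormSq, hs, sq]
  calc vecNormSq (countsketchMatrix h s *ᵥ x) - vecNormSq x
      = ∑ p ∈ univ ×ˢ univ, (if h p.1 = h p.2 then x p.1 * x p.2 else 0) * (s p.1 * s p.2)
          - vecNormSq x := by
        simp_rw [vecNormSq, Matrix.mulVec, dotProduct, sq, sum_mul_sum]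
        rw [sum_comm, sum_product]
        simp_rw [← hpair]
        rw [sum_congr rfl fun j _ => sum_comm]
    _ = _ := by
        rw [← diag_union_offDiag, sum_union (disjoint_diag_offDiag _), sum_diag, hdiag]
        ring

lemma sum_sum_sq_countsketch_error (x : ι → ℝ) :
    ∑ h : ι → κ, ∑ b : ι → Bool,
        (vecNormSq (countsketchMatrix h (boolSign ∘ b) *ᵥ x) - vecNormSq x) ^ 2 =
      2 * 2 ^ Fintype.card ι * Fintype.card κ ^ (Fintype.card ι - 1) *
        ∑ p ∈ univ.offDiag, x p.1 ^ 2 * x p.2 ^ 2 := by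
  have hsigns : ∀ h : ι → κ, ∑ b : ι → Bool,
      (vecNormSq (countsketchMatrix h (boolSign ∘ b) *ᵥ x) - vecNormSq x) ^ 2 =
        ∑ p ∈ univ.offDiag, 2 * 2 ^ Fintype.card ι *
          (x p.1 ^ 2 * x p.2 ^ 2 * if h p.1 = h p.2 then 1 else 0) := by
    intro h
    rw [sum_congr rfl fun b _ => by
      rw [vecNormSq_countsketchMatrix_mulVec_sub h (s := boolSign ∘ b) fun j =>
        boolSign_mul_self (b j)]]
    simp_rw [Function.comp_apply, sum_sq_sum_offDiag_boolSign, mul_sum]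
    refine sum_congr rfl fun p _ => ?_
    by_cases hp : h p.1 = h p.2
    · simp [hp]; ring
    · simp [hp, Ne.symm hp]
  rw [sum_congr rfl fun h _ => hsigns h, sum_comm, mul_sum]
  refine sum_congr rfl fun p hp => ?_
  rw [← mul_sum, ← mul_sum, sum_boole, card_filter_apply_eq_apply (mem_offDiag.1 hp).2.2]
  push_cast
  ring

lemma sum_offDiag_sq_mul_sq_le (x : ι → ℝ) :
    ∑ p ∈ univ.offDiag, x p.1 ^ 2 * x p.2 ^ 2 ≤ vecNormSq x ^ 2 :=
  calc ∑ p ∈ univ.offDiag, x p.1 ^ 2 * x p.2 ^ 2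
      ≤ ∑ p ∈ univ ×ˢ univ, x p.1 ^ 2 * x p.2 ^ 2 :=
        sum_le_sum_of_subset_of_nonneg (by simp [← diag_union_offDiag]) fun _ _ _ => by positivity
    _ = vecNormSq x ^ 2 := by rw [sum_product, vecNormSq, sq (∑ i, _), sum_mul_sum]

end Countsketch

section Partition
variable {Ω ι : Type*} [MeasurableSpace Ω] {μ : Measure Ω} [IsFiniteMeasure μ]

lemma nullMeasurableSet_of_measure_add_measure_compl_le {s : Set Ω}
    (h : μ s + μ sᶜ ≤ μ Set.univ) : NullMeasurableSet s μ := by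
  set t := toMeasurable μ s
  have ht : MeasurableSet t := measurableSet_toMeasurable μ s
  have hst : s ⊆ t := subset_toMeasurable μ s
  have hcompl : sᶜ \ t = tᶜ := by
    ext ω; simpa using fun hω => mt (@hst ω) hω
  have hsplit : μ (sᶜ ∩ t) + μ tᶜ = μ sᶜ := hcompl ▸ measure_inter_add_sdiff sᶜ ht
  -- `μ s + μ (sᶜ ∩ t) + μ tᶜ = μ s + μ sᶜ ≤ μ univ = μ s + μ tᶜ`
  have hgap : μ (sᶜ ∩ t) = 0 := by
    have hfin : μ s + μ tᶜ ≠ ⊤ := by finiteness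
    rw [← measure_add_measure_compl ht, measure_toMeasurable, ← hsplit] at h
    refine le_zero_iff.1 ((ENNReal.add_le_add_iff_left hfin).1 ?_)
    calc μ s + μ tᶜ + μ (sᶜ ∩ t) = μ s + (μ (sᶜ ∩ t) + μ tᶜ) := by ring
      _ ≤ μ s + μ tᶜ := h
      _ = μ s + μ tᶜ + 0 := (add_zero _).symm
  refine ht.nullMeasurableSet.congr (ae_eq_set.2 ⟨?_, by simp [Set.sdiff_eq_empty.2 hst]⟩)
  rwa [Set.sdiff_eq, Set.inter_comm]

lemma integral_comp_eq_sum_measureReal_preimage [Fintype ι] {T : Ω → ι}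
    (hT : ∑ e, μ (T ⁻¹' {e}) ≤ μ Set.univ) (G : ι → ℝ) :
    ∫ ω, G (T ω) ∂μ = ∑ e, μ.real (T ⁻¹' {e}) * G e := by
  classical
  have hnull : ∀ e, NullMeasurableSet (T ⁻¹' {e}) μ := by
    intro e
    refine nullMeasurableSet_of_measure_add_measure_compl_le ?_
    calc μ (T ⁻¹' {e}) + μ (T ⁻¹' {e})ᶜ
        ≤ μ (T ⁻¹' {e}) + ∑ f ∈ univ.erase e, μ (T ⁻¹' {f}) := by
          gcongr
          refine (measure_mono fun ω hω => ?_).trans (measure_biUnion_finset_le _ _)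
          exact Set.mem_biUnion (mem_erase.2 ⟨hω, mem_univ _⟩) rfl
      _ = ∑ f, μ (T ⁻¹' {f}) := add_sum_erase _ (fun f => μ (T ⁻¹' {f})) (mem_univ e)
      _ ≤ μ Set.univ := hT
  have hpt : (fun ω => G (T ω)) = fun ω => ∑ e, (T ⁻¹' {e}).indicator (fun _ => G e) ω := by
    ext ω
    simp [Set.indicator_apply, eq_comm]
  rw [hpt, integral_finsetSum _ fun e _ => (integrable_const _).indicator₀ (hnull e)]
  simp_rw [integral_indicator₀ (hnull _), setIntegral_const, smul_eq_mul]

end Partition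

section CountsketchLaw
variable {Ω : Type*} [MeasurableSpace Ω] {μ : Measure Ω} {r n : ℕ}

lemma measure_countsketch_fiber {row : Ω → Fin n → Fin r} {sign : Ω → Fin n → ℝ}
    (hind : iIndepFun (fun j ω => (row ω j, sign ω j)) μ)
    (hprob : ∀ (j : Fin n) (i : Fin r) (s : ℝ), s = 1 ∨ s = -1 →
      μ {ω | row ω j = i ∧ sign ω j = s} = 1 / (2 * (r : ENNReal)))
    (h : Fin n → Fin r) (b : Fin n → Bool) :
    μ {ω | row ω = h ∧ sign ω = boolSign ∘ b} = (1 / (2 * (r : ENNReal))) ^ n := by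
  have hset : {ω | row ω = h ∧ sign ω = boolSign ∘ b} =
      ⋂ j ∈ (univ : Finset (Fin n)),
        (fun ω => (row ω j, sign ω j)) ⁻¹' ({h j} ×ˢ {boolSign (b j)}) := by
    ext ω; simp [funext_iff, forall_and]
  rw [hset, hind.measure_inter_preimage_eq_mul univ
    fun j _ => (measurableSet_singleton _).prod (measurableSet_singleton _)]
  rw [prod_congr rfl fun j _ => ?_, prod_const, card_univ, Fintype.card_fin]
  rw [← hprob j (h j) (boolSign (b j)) (by cases b j <;> simp [boolSign])]
  rfl

lemma integral_comp_countsketch_eq_average [IsProbabilityMeasure μ] [NeZero r]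
    {row : Ω → Fin n → Fin r} {sign : Ω → Fin n → ℝ}
    (hind : iIndepFun (fun j ω => (row ω j, sign ω j)) μ)
    (hsign : ∀ ω j, sign ω j = 1 ∨ sign ω j = -1)
    (hprob : ∀ (j : Fin n) (i : Fin r) (s : ℝ), s = 1 ∨ s = -1 →
      μ {ω | row ω j = i ∧ sign ω j = s} = 1 / (2 * (r : ENNReal)))
    (G : (Fin n → Fin r) → (Fin n → Bool) → ℝ) :
    ∫ ω, G (row ω) (fun j => decide (sign ω j = 1)) ∂μ =
      (1 / (2 * r)) ^ n * ∑ h, ∑ b, G h b := by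
  let T : Ω → (Fin n → Fin r) × (Fin n → Bool) := fun ω => (row ω, fun j => decide (sign ω j = 1))
  have hfiber : ∀ e, μ (T ⁻¹' {e}) = (1 / (2 * (r : ENNReal))) ^ n := by
    rintro ⟨h, b⟩
    rw [← measure_countsketch_fiber hind hprob h b]
    congr 1
    ext ω
    have hsignT : sign ω = boolSign ∘ (T ω).2 :=
      funext fun j => (boolSign_decide_eq_one (hsign ω j)).symm
    change T ω = (h, b) ↔ row ω = h ∧ sign ω = boolSign ∘ b
    rw [Prod.ext_iff, hsignT, boolSign_injective.comp_left.eq_iff]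
  have hsum : ∑ e, μ (T ⁻¹' {e}) = 1 := by
    have h2r : (2 * (r : ENNReal)) ≠ 0 := by simp [NeZero.ne r]
    simp only [hfiber, sum_const, card_univ, Fintype.card_prod, Fintype.card_fun,
      Fintype.card_fin, Fintype.card_bool, nsmul_eq_mul]
    push_cast
    rw [← mul_pow, ← mul_pow, mul_comm (r : ENNReal), ENNReal.mul_div_cancel h2r (by finiteness),
      one_pow]
  calc ∫ ω, G (row ω) (fun j => decide (sign ω j = 1)) ∂μ
      = ∑ e, μ.real (T ⁻¹' {e}) * G e.1 e.2 :=
        integral_comp_eq_sum_measureReal_preimage (hsum.trans measure_univ.symm).le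
          fun e => G e.1 e.2
    _ = (1 / (2 * r)) ^ n * ∑ h, ∑ b, G h b := by
        simp [Measure.real, hfiber, ← mul_sum, Fintype.sum_prod_type]

theorem integral_sq_countsketch_error [IsProbabilityMeasure μ] [NeZero r]
    {S : Ω → Matrix (Fin r) (Fin n) ℝ} (hS : IsCountsketch μ S) (x : Fin n → ℝ) :
    ∫ ω, (vecNormSq (S ω *ᵥ x) - vecNormSq x) ^ 2 ∂μ =
      2 / r * ∑ p ∈ univ.offDiag, x p.1 ^ 2 * x p.2 ^ 2 := by
  obtain ⟨row, sign, hS, hind, hsign, hprob⟩ := hS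
  have hS' : ∀ ω, S ω = countsketchMatrix (row ω) (boolSign ∘ fun j => decide (sign ω j = 1)) := by
    intro ω; ext i j; simp [countsketchMatrix, hS, boolSign_decide_eq_one (hsign ω j)]
  simp_rw [hS']
  rw [integral_comp_countsketch_eq_average hind hsign hprob
      fun h b => (vecNormSq (countsketchMatrix h (boolSign ∘ b) *ᵥ x) - vecNormSq x) ^ 2,
    sum_sum_sq_countsketch_error, Fintype.card_fin, Fintype.card_fin]
  have hr : (r : ℝ) ≠ 0 := Nat.cast_ne_zero.2 (NeZero.ne r)
  cases n with
  | zero => simp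
  | succ m =>
    rw [Nat.add_sub_cancel, one_div, inv_pow, mul_pow]
    field_simp
    ring

end CountsketchLaw

/-- There is an absolute constant `C > 0` so that any Countsketch matrix `S ∈ ℝ^{r×n}` with
`r ≥ C/(ε²δ)` has the `(ε, δ, 2)`-JL moment property. -/
theorem stmt2 :
    ∃ C : ℝ, 0 < C ∧
      ∀ (Ω : Type) (_ : MeasurableSpace Ω) (μ : Measure Ω), IsProbabilityMeasure μ →
        ∀ (r n : ℕ) (S : Ω → Matrix (Fin r) (Fin n) ℝ) (ε δ : ℝ),
          ε ∈ Set.Ioo (0 : ℝ) 1 → δ ∈ Set.Ioo (0 : ℝ) 1 →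
          IsCountsketch μ S → C / (ε ^ 2 * δ) ≤ (r : ℝ) →
          JLMoment μ S ε δ 2 := by
  refine ⟨2, two_pos, ?_⟩
  rintro Ω _ μ _ r n S ε δ ⟨hε, -⟩ ⟨hδ, -⟩ hS hr x hx
  have hεδ : 0 < ε ^ 2 * δ := by positivity
  have hr0 : (0 : ℝ) < r := (div_pos two_pos hεδ).trans_le hr
  have : NeZero r := ⟨by exact_mod_cast hr0.ne'⟩
  calc ∫ ω, |vecNormSq (S ω *ᵥ x) - 1| ^ 2 ∂μ
      = ∫ ω, (vecNormSq (S ω *ᵥ x) - vecNormSq x) ^ 2 ∂μ := by simp_rw [sq_abs, hx]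
    _ = 2 / r * ∑ p ∈ univ.offDiag, x p.1 ^ 2 * x p.2 ^ 2 := integral_sq_countsketch_error hS x
    _ ≤ 2 / r * vecNormSq x ^ 2 := by gcongr; exact sum_offDiag_sq_mul_sq_le x
    _ ≤ ε ^ 2 * δ := by
        rw [hx, one_pow, mul_one, div_le_iff₀ hr0]
        rwa [div_le_iff₀ hεδ, mul_comm] at hr
end

section
/- Let B ∈ ℝ^{n×n}, and for k ∈ [n] let B_k ∈ ℝ^n denote the transpose of the k-th row of B and set A^k = B_k B_kᵀ ∈ ℝ^{n×n}. Then min over unit vectors u, v ∈ ℝ^n of Σ_{k=1}^n ‖u uᵀ A^k v vᵀ − A^k‖_F² equals ‖B‖_{2,4}⁴ − ‖B‖_{2→4}⁴. -/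
open Matrix

/-- Euclidean norm of a vector. -/
noncomputable def vecNorm {n : Type*} [Fintype n] (v : n → ℝ) : ℝ := Real.sqrt (vecNormSq v)

/-- Squared Frobenius norm of a real matrix. -/
noncomputable def frobSq {m n : Type*} [Fintype m] [Fintype n] (A : Matrix m n ℝ) : ℝ :=
  ∑ i, ∑ j, (A i j) ^ 2

/-- `‖B‖_{2,4}⁴ = Σ_i ‖B_{i,:}‖₂⁴`, the fourth power of the `(2,4)`-norm of `B`. -/
noncomputable def norm24pow4 {n : ℕ} (B : Matrix (Fin n) (Fin n) ℝ) : ℝ :=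
  ∑ i, (∑ j, (B i j) ^ 2) ^ 2

/-- `‖B‖_{2→4} = sup_{x ≠ 0} ‖Bx‖₄ / ‖x‖₂`, the `2→4` operator norm of `B`. -/
noncomputable def norm2to4 {n : ℕ} (B : Matrix (Fin n) (Fin n) ℝ) : ℝ :=
  sSup {r : ℝ | ∃ x : Fin n → ℝ, x ≠ 0 ∧
    r = (∑ i, (B.mulVec x i) ^ 4) ^ ((1 : ℝ) / 4) / vecNorm x}

/-! ### Auxiliary lemmas -/

section Aux

lemma aux_entry_eq {n : ℕ} (u v w : Fin n → ℝ) (i j : Fin n) :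
    (vecMulVec u u * vecMulVec w w * vecMulVec v v) i j
      = u i * v j * ((∑ t, u t * w t) * (∑ t, w t * v t)) := by
  simp only [Matrix.mul_apply, vecMulVec_apply, Finset.sum_mul_sum, Finset.mul_sum,
    Finset.sum_mul]
  exact Finset.sum_congr rfl fun l _ => Finset.sum_congr rfl fun t _ => by ring

lemma aux_double_sum {n : ℕ} (c : ℝ) (u v w : Fin n → ℝ) :
    ∑ i, ∑ j, (u i * v j * c - w i * w j) ^ 2
      = c ^ 2 * (∑ i, u i ^ 2) * (∑ j, v j ^ 2)
        - 2 * c * (∑ i, u i * w i) * (∑ j, w j * v j)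
        + (∑ i, w i ^ 2) * (∑ j, w j ^ 2) := by
  have key : ∀ i : Fin n, ∑ j, (u i * v j * c - w i * w j) ^ 2
      = c ^ 2 * u i ^ 2 * (∑ j, v j ^ 2) - 2 * c * (u i * w i) * (∑ j, w j * v j)
        + w i ^ 2 * (∑ j, w j ^ 2) := by
    intro i
    rw [Finset.mul_sum, Finset.mul_sum, Finset.mul_sum,
      ← Finset.sum_sub_distrib, ← Finset.sum_add_distrib]
    exact Finset.sum_congr rfl fun j _ => by ring
  calc ∑ i, ∑ j, (u i * v j * c - w i * w j) ^ 2
      = ∑ i, (c ^ 2 * u i ^ 2 * (∑ j, v j ^ 2) - 2 * c * (u i * w i) * (∑ j, w j * v j)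
        + w i ^ 2 * (∑ j, w j ^ 2)) := Finset.sum_congr rfl fun i _ => key i
    _ = _ := by
        rw [Finset.sum_add_distrib, Finset.sum_sub_distrib]
        simp only [← Finset.sum_mul, ← Finset.mul_sum]

lemma aux_frob_term {n : ℕ} (u v w : Fin n → ℝ) (hu : ∑ i, u i ^ 2 = 1)
    (hv : ∑ i, v i ^ 2 = 1) :
    frobSq (vecMulVec u u * vecMulVec w w * vecMulVec v v - vecMulVec w w)
      = (∑ i, w i ^ 2) ^ 2 - (∑ t, u t * w t) ^ 2 * (∑ t, w t * v t) ^ 2 := by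
  have h : frobSq (vecMulVec u u * vecMulVec w w * vecMulVec v v - vecMulVec w w)
      = ∑ i, ∑ j, (u i * v j * ((∑ t, u t * w t) * (∑ t, w t * v t)) - w i * w j) ^ 2 := by
    unfold frobSq
    exact Finset.sum_congr rfl fun i _ => Finset.sum_congr rfl fun j _ => by
      rw [Matrix.sub_apply, aux_entry_eq, vecMulVec_apply]
  rw [h, aux_double_sum, hu, hv]
  ring

variable {n : ℕ} (B : Matrix (Fin n) (Fin n) ℝ)

/-- `‖Bx‖₄⁴`. -/
noncomputable def hfun (x : Fin n → ℝ) : ℝ := ∑ i, (B.mulVec x i) ^ 4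

lemma hfun_nonneg (x : Fin n → ℝ) : 0 ≤ hfun B x :=
  Finset.sum_nonneg fun i _ => by positivity

lemma hfun_smul (c : ℝ) (x : Fin n → ℝ) : hfun B (c • x) = c ^ 4 * hfun B x := by
  simp only [hfun, mulVec_smul, Pi.smul_apply, smul_eq_mul, mul_pow, Finset.mul_sum]

lemma hfun_cont : Continuous (hfun B) := by
  unfold hfun mulVec dotProduct
  fun_prop

lemma aux_vecNormSq_nonneg {m : Type*} [Fintype m] (x : m → ℝ) : 0 ≤ vecNormSq x :=
  Finset.sum_nonneg fun i _ => sq_nonneg _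

lemma aux_vecNorm_pos {m : Type*} [Fintype m] {x : m → ℝ} (hx : x ≠ 0) : 0 < vecNorm x := by
  apply Real.sqrt_pos.mpr
  obtain ⟨i, hi⟩ := Function.ne_iff.mp hx
  calc (0:ℝ) < x i ^ 2 := lt_of_le_of_ne (sq_nonneg _) (Ne.symm (pow_ne_zero 2 hi))
    _ ≤ vecNormSq x := Finset.single_le_sum (fun j _ => sq_nonneg (x j)) (Finset.mem_univ i)

lemma aux_rpow_fourth (c : ℝ) (hc : 0 ≤ c) : (c ^ 4 : ℝ) ^ ((1:ℝ)/4) = c := by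
  rw [← Real.rpow_natCast c 4, ← Real.rpow_mul hc]
  norm_num

lemma sphere_compact_max (hn : 0 < n) :
    ∃ x0 : Fin n → ℝ, vecNormSq x0 = 1 ∧ ∀ x, vecNormSq x = 1 → hfun B x ≤ hfun B x0 := by
  have hcont : Continuous (vecNormSq : (Fin n → ℝ) → ℝ) := by
    unfold vecNormSq; fun_prop
  set S1 : Set (Fin n → ℝ) := {x | vecNormSq x = 1} with hS1
  have hclosed : IsClosed S1 := isClosed_eq hcont continuous_const
  have hbdd : Bornology.IsBounded S1 := by
    apply Bornology.IsBounded.subset (Metric.isBounded_closedBall (x := (0 : Fin n → ℝ)) (r := 1))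
    intro x hx
    rw [Metric.mem_closedBall, dist_zero_right]
    rw [pi_norm_le_iff_of_nonneg zero_le_one]
    intro i
    have h1 : x i ^ 2 ≤ 1 := by
      rw [← hx]
      exact Finset.single_le_sum (fun j _ => sq_nonneg (x j)) (Finset.mem_univ i)
    rw [Real.norm_eq_abs]
    nlinarith [abs_nonneg (x i), sq_abs (x i)]
  have hcompact : IsCompact S1 := Metric.isCompact_of_isClosed_isBounded hclosed hbdd
  have hne : S1.Nonempty := by
    refine ⟨Pi.single ⟨0, hn⟩ 1, ?_⟩
    simp only [hS1, Set.mem_setOf_eq, vecNormSq, Pi.single_apply]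
    rw [Finset.sum_eq_single ⟨0, hn⟩]
    · simp
    · intro b _ hb; simp [hb]
    · simp
  obtain ⟨x0, hx0, hmax⟩ := hcompact.exists_isMaxOn hne (hfun_cont B).continuousOn
  exact ⟨x0, hx0, fun x hx => hmax hx⟩

lemma norm2to4_eq {x0 : Fin n → ℝ} (hx0 : vecNormSq x0 = 1)
    (hmax : ∀ x, vecNormSq x = 1 → hfun B x ≤ hfun B x0) :
    norm2to4 B = (hfun B x0) ^ ((1:ℝ)/4) := by
  have hx0ne : x0 ≠ 0 := by
    intro h
    rw [h] at hx0
    simp [vecNormSq] at hx0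
  apply IsGreatest.csSup_eq
  constructor
  · refine ⟨x0, hx0ne, ?_⟩
    rw [vecNorm, hx0, Real.sqrt_one, div_one]
    rfl
  · rintro r ⟨x, hx, rfl⟩
    have hc : 0 < vecNorm x := aux_vecNorm_pos hx
    set c := vecNorm x with hcdef
    have hcsq : c ^ 2 = vecNormSq x := Real.sq_sqrt (aux_vecNormSq_nonneg x)
    set y := c⁻¹ • x with hy
    have hyu : vecNormSq y = 1 := by
      simp only [hy, vecNormSq, Pi.smul_apply, smul_eq_mul, mul_pow, ← Finset.mul_sum]
      rw [show ∑ i, x i ^ 2 = vecNormSq x from rfl, ← hcsq]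
      field_simp
    have hxy : x = c • y := by
      rw [hy, smul_smul, mul_inv_cancel₀ hc.ne', one_smul]
    have hhx : hfun B x = c ^ 4 * hfun B y := by rw [hxy, hfun_smul]
    have h0 : (∑ i, (B.mulVec x i) ^ 4) = hfun B x := rfl
    rw [h0, hhx, Real.mul_rpow (by positivity) (hfun_nonneg B y), aux_rpow_fourth c hc.le,
      mul_comm, mul_div_assoc, div_self hc.ne', mul_one]
    exact Real.rpow_le_rpow (hfun_nonneg B y) (hmax y hyu) (by norm_num)

lemma norm2to4_pow4 {x0 : Fin n → ℝ} (hx0 : vecNormSq x0 = 1)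
    (hmax : ∀ x, vecNormSq x = 1 → hfun B x ≤ hfun B x0) :
    norm2to4 B ^ 4 = hfun B x0 := by
  rw [norm2to4_eq B hx0 hmax, ← Real.rpow_natCast _ 4, ← Real.rpow_mul (hfun_nonneg B x0)]
  norm_num

end Aux

/-- For `B ∈ ℝ^{n×n}` with `A^k = B_k B_kᵀ` (`B_k` the `k`-th row of `B`), the minimum of
`Σ_k ‖u uᵀ A^k v vᵀ − A^k‖_F²` over unit vectors `u, v` equals
`‖B‖_{2,4}⁴ − ‖B‖_{2→4}⁴`. -/
theorem stmt14 {n : ℕ} (hn : 0 < n) (B : Matrix (Fin n) (Fin n) ℝ) :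
    IsLeast
      {val : ℝ | ∃ u v : Fin n → ℝ, vecNormSq u = 1 ∧ vecNormSq v = 1 ∧
        val = ∑ k : Fin n,
          frobSq (vecMulVec u u * vecMulVec (B k) (B k) * vecMulVec v v
            - vecMulVec (B k) (B k))}
      (norm24pow4 B - norm2to4 B ^ 4) := by
  obtain ⟨x0, hx0, hmax⟩ := sphere_compact_max B hn
  have hpow4 : norm2to4 B ^ 4 = hfun B x0 := norm2to4_pow4 B hx0 hmax
  -- general formula for the objective:
  have hval : ∀ u v : Fin n → ℝ, vecNormSq u = 1 → vecNormSq v = 1 →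
      (∑ k : Fin n, frobSq (vecMulVec u u * vecMulVec (B k) (B k) * vecMulVec v v
          - vecMulVec (B k) (B k)))
        = norm24pow4 B - ∑ k : Fin n, (∑ t, u t * B k t) ^ 2 * (∑ t, B k t * v t) ^ 2 := by
    intro u v hu hv
    unfold norm24pow4
    rw [← Finset.sum_sub_distrib]
    exact Finset.sum_congr rfl fun k _ => aux_frob_term u v (B k) hu hv
  have hdot : ∀ (x : Fin n → ℝ) (k : Fin n), (∑ t, x t * B k t) = B.mulVec x k := by
    intro x k
    simp only [mulVec, dotProduct]
    exact Finset.sum_congr rfl fun t _ => mul_comm _ _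
  have hdot' : ∀ (x : Fin n → ℝ) (k : Fin n), (∑ t, B k t * x t) = B.mulVec x k := fun x k => rfl
  constructor
  · -- membership: take u = v = x0
    refine ⟨x0, x0, hx0, hx0, ?_⟩
    rw [hval x0 x0 hx0 hx0, hpow4]
    congr 1
    unfold hfun
    exact Finset.sum_congr rfl fun k _ => by rw [hdot, hdot']; ring
  · -- lower bound
    rintro val ⟨u, v, hu, hv, rfl⟩
    rw [hval u v hu hv, hpow4]
    have hkey : ∑ k : Fin n, (∑ t, u t * B k t) ^ 2 * (∑ t, B k t * v t) ^ 2 ≤ hfun B x0 := by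
      set a := ∑ k : Fin n, (∑ t, u t * B k t) ^ 2 * (∑ t, B k t * v t) ^ 2 with ha
      have ha0 : 0 ≤ a := Finset.sum_nonneg fun k _ => by positivity
      have hM0 : 0 ≤ hfun B x0 := hfun_nonneg B x0
      have hcs : a ^ 2 ≤ (∑ k : Fin n, (∑ t, u t * B k t) ^ 4)
          * ∑ k : Fin n, (∑ t, B k t * v t) ^ 4 := by
        have := Finset.sum_mul_sq_le_sq_mul_sq Finset.univ
          (fun k : Fin n => (∑ t, u t * B k t) ^ 2) (fun k : Fin n => (∑ t, B k t * v t) ^ 2)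
        calc a ^ 2 ≤ (∑ k : Fin n, ((∑ t, u t * B k t) ^ 2) ^ 2)
              * ∑ k : Fin n, ((∑ t, B k t * v t) ^ 2) ^ 2 := this
          _ = _ := by
              congr 1 <;> exact Finset.sum_congr rfl fun k _ => by ring
      have hu4 : (∑ k : Fin n, (∑ t, u t * B k t) ^ 4) ≤ hfun B x0 := by
        have : (∑ k : Fin n, (∑ t, u t * B k t) ^ 4) = hfun B u :=
          Finset.sum_congr rfl fun k _ => by rw [hdot]
        rw [this]
        exact hmax u hu
      have hv4 : (∑ k : Fin n, (∑ t, B k t * v t) ^ 4) ≤ hfun B x0 := by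
        have : (∑ k : Fin n, (∑ t, B k t * v t) ^ 4) = hfun B v :=
          Finset.sum_congr rfl fun k _ => by rw [hdot']
        rw [this]
        exact hmax v hv
      have hu40 : 0 ≤ ∑ k : Fin n, (∑ t, u t * B k t) ^ 4 :=
        Finset.sum_nonneg fun k _ => by positivity
      have hv40 : 0 ≤ ∑ k : Fin n, (∑ t, B k t * v t) ^ 4 :=
        Finset.sum_nonneg fun k _ => by positivity
      nlinarith [hcs, hu4, hv4, ha0, hM0, hu40, hv40]
    linarith
end

section
/- Let p ≤ q be positive integers, let P¹, …, P^p ∈ ℝ^{n×n} be orthogonal projection matrices, and let a ∈ ℝ^{n^q}. Then ‖(P¹ ⊗ P² ⊗ ⋯ ⊗ P^p ⊗ I_{n^{q−p}})a − a‖₂ ≤ Σ_{m=1}^p ‖(I_{n^{m−1}} ⊗ P^m ⊗ I_{n^{q−m}})a − a‖₂. -/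
open Matrix

/-- Reinterpret a vector in `ℝ^a` as a vector in `ℝ^b` when `a = b`. -/
def castVec {a b : ℕ} (h : a = b) (v : Fin a → ℝ) : Fin b → ℝ :=
  fun i => v (Fin.cast h.symm i)

/-- Kronecker product of matrices indexed by `Fin`, with the standard row-major index
identification of `Fin a × Fin c` with `Fin (a·c)`. -/
def finKron {a b c d : ℕ} (A : Matrix (Fin a) (Fin b) ℝ) (B : Matrix (Fin c) (Fin d) ℝ) :
    Matrix (Fin (a * c)) (Fin (b * d)) ℝ :=
  Matrix.of fun i j => A i.divNat j.divNat * B i.modNat j.modNat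

/-- The iterated Kronecker product `P 0 ⊗ P 1 ⊗ ⋯ ⊗ P (p−1)` of `p` matrices in
`ℝ^{n×n}`, as a matrix in `ℝ^{n^p × n^p}`. -/
def bigKron {n : ℕ} : ∀ p : ℕ, (Fin p → Matrix (Fin n) (Fin n) ℝ) →
    Matrix (Fin (n ^ p)) (Fin (n ^ p)) ℝ
  | 0, _ => 1
  | (p + 1), P =>
      Matrix.reindex (finCongr (pow_succ' n p).symm) (finCongr (pow_succ' n p).symm)
        (finKron (P 0) (bigKron p fun i => P i.succ))

namespace S16

open Finset



variable {ι κ : Type*} [Fintype ι] [Fintype κ]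

lemma vecNormSq_nonneg (v : ι → ℝ) : 0 ≤ vecNormSq v :=
  Finset.sum_nonneg fun i _ => sq_nonneg _

lemma vecNorm_nonneg (v : ι → ℝ) : 0 ≤ vecNorm v := Real.sqrt_nonneg _

lemma vecNorm_zero : vecNorm (0 : ι → ℝ) = 0 := by
  simp [vecNorm, vecNormSq]

lemma vecNorm_sq (v : ι → ℝ) : (vecNorm v) ^ 2 = vecNormSq v :=
  Real.sq_sqrt (vecNormSq_nonneg v)

lemma cauchy (u v : ι → ℝ) : ∑ i, u i * v i ≤ vecNorm u * vecNorm v := by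
  have h := Finset.sum_mul_sq_le_sq_mul_sq Finset.univ u v
  have h2 : ∑ i, u i * v i ≤ |∑ i, u i * v i| := le_abs_self _
  have h3 : |∑ i, u i * v i| = Real.sqrt ((∑ i, u i * v i) ^ 2) := by
    rw [Real.sqrt_sq_eq_abs]
  calc ∑ i, u i * v i ≤ Real.sqrt ((∑ i, u i * v i) ^ 2) := by rw [← h3]; exact h2
    _ ≤ Real.sqrt (vecNormSq u * vecNormSq v) := Real.sqrt_le_sqrt h
    _ = vecNorm u * vecNorm v := by
        rw [Real.sqrt_mul (vecNormSq_nonneg u)]; rfl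

lemma vecNorm_add_le (u v : ι → ℝ) : vecNorm (u + v) ≤ vecNorm u + vecNorm v := by
  have hc := cauchy u v
  have h1 : vecNormSq (u + v) ≤ (vecNorm u + vecNorm v) ^ 2 := by
    have e1 : vecNormSq (u + v) = vecNormSq u + (2 * (∑ i, u i * v i) + vecNormSq v) := by
      simp only [vecNormSq, Pi.add_apply]
      rw [show (∑ x, (u x + v x) ^ 2) = ∑ x, (u x ^ 2 + (2 * (u x * v x) + v x ^ 2)) from
        Finset.sum_congr rfl fun i _ => by ring]
      rw [Finset.sum_add_distrib, Finset.sum_add_distrib, ← Finset.mul_sum]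
    have e2 : (vecNorm u + vecNorm v) ^ 2
        = vecNormSq u + 2 * (vecNorm u * vecNorm v) + vecNormSq v := by
      rw [← vecNorm_sq u, ← vecNorm_sq v]; ring
    rw [e1, e2]; linarith
  calc vecNorm (u + v) ≤ Real.sqrt ((vecNorm u + vecNorm v) ^ 2) := Real.sqrt_le_sqrt h1
    _ = vecNorm u + vecNorm v := Real.sqrt_sq
        (by have := vecNorm_nonneg u; have := vecNorm_nonneg v; linarith)

lemma vecNorm_sub_le (u w v : ι → ℝ) : vecNorm (u - v) ≤ vecNorm (u - w) + vecNorm (w - v) := by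
  have : u - v = (u - w) + (w - v) := by abel
  rw [this]; exact vecNorm_add_le _ _

/-- Contraction property of symmetric idempotent matrices. -/
lemma contraction (M : Matrix ι ι ℝ) (hs : M.IsSymm) (hi : M * M = M) (v : ι → ℝ) :
    vecNorm (M.mulVec v) ≤ vecNorm v := by
  classical
  have key : vecNormSq (M.mulVec v) = ∑ i, (M.mulVec v) i * v i := by
    have h1 : vecNormSq (M.mulVec v) = (M.mulVec v) ⬝ᵥ (M.mulVec v) := by
      simp [vecNormSq, dotProduct, sq]
    have h2 : (M.mulVec v) ⬝ᵥ (M.mulVec v) = (M.mulVec v) ⬝ᵥ v := by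
      rw [dotProduct_mulVec (M.mulVec v) M v]
      have : (M.mulVec v) ᵥ* M = M.mulVec v := by
        rw [← Matrix.mulVec_transpose, Matrix.mulVec_mulVec]
        rw [hs, hi]
      rw [this]
    rw [h1, h2]; rfl
  have hcs := cauchy (M.mulVec v) v
  have hS := vecNorm_nonneg (M.mulVec v)
  have hT := vecNorm_nonneg v
  have hsq := vecNorm_sq (M.mulVec v)
  nlinarith [hcs, hS, hT, hsq, key]

variable [DecidableEq ι] [DecidableEq κ]

/-- Matrix on functions applying `F i` in coordinate `i`. -/
noncomputable def KK (F : ι → Matrix κ κ ℝ) : Matrix (ι → κ) (ι → κ) ℝ :=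
  Matrix.of fun f g => ∏ i, F i (f i) (g i)

lemma KK_apply (F : ι → Matrix κ κ ℝ) (f g : ι → κ) :
    KK F f g = ∏ i, F i (f i) (g i) := rfl

lemma KK_mul (F G : ι → Matrix κ κ ℝ) : KK F * KK G = KK (fun i => F i * G i) := by
  ext f g
  simp only [Matrix.mul_apply, KK_apply]
  rw [show (∑ h : ι → κ, (∏ i, F i (f i) (h i)) * ∏ i, G i (h i) (g i))
      = ∑ h : ι → κ, ∏ i, (F i (f i) (h i) * G i (h i) (g i)) from
    Finset.sum_congr rfl fun h _ => (Finset.prod_mul_distrib).symm]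
  exact (Fintype.prod_sum fun i k => F i (f i) k * G i k (g i)).symm

lemma KK_one : KK (fun _ : ι => (1 : Matrix κ κ ℝ)) = 1 := by
  ext f g
  simp only [KK_apply, Matrix.one_apply]
  rw [show (∏ i, (if f i = g i then (1:ℝ) else 0)) = if (∀ i, f i = g i) then 1 else 0 from
    Fintype.prod_boole]
  exact if_congr funext_iff.symm rfl rfl

lemma KK_isSymm (F : ι → Matrix κ κ ℝ) (h : ∀ i, (F i).IsSymm) : (KK F).IsSymm := by
  unfold Matrix.IsSymm
  ext f g
  simp only [Matrix.transpose_apply, KK_apply]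
  exact Finset.prod_congr rfl fun i _ => by
    conv_lhs => rw [← h i]
    rfl

/-- The abstract telescoping inequality. -/
theorem abstract_ineq (P : ι → Matrix κ κ ℝ)
    (hP : ∀ i, (P i).IsSymm ∧ P i * P i = P i) (a : (ι → κ) → ℝ) (s : Finset ι) :
    vecNorm ((KK (fun i => if i ∈ s then P i else 1)).mulVec a - a) ≤
      ∑ i ∈ s, vecNorm
        ((KK (Function.update (fun _ => (1 : Matrix κ κ ℝ)) i (P i))).mulVec a - a) := by
  classical
  induction s using Finset.induction with
  | empty =>
      simp only [Finset.notMem_empty, if_false, KK_one, Matrix.one_mulVec, sub_self,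
        Finset.sum_empty, vecNorm_zero, le_refl]
  | @insert i s hi ih =>
      set Q := KK (Function.update (fun _ => (1 : Matrix κ κ ℝ)) i (P i)) with hQ
      have hsplit : (fun j => if j ∈ insert i s then P j else 1)
          = fun j => (Function.update (fun _ => (1 : Matrix κ κ ℝ)) i (P i)) j
              * (if j ∈ s then P j else 1) := by
        funext j
        by_cases hji : j = i
        · subst hji
          simp [Function.update_self, hi]
        · simp [Function.update_of_ne hji, hji]
      have hKprod : KK (fun j => if j ∈ insert i s then P j else 1)
          = Q * KK (fun j => if j ∈ s then P j else 1) := by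
        rw [hsplit, ← KK_mul]
      set Ks := KK (fun j => if j ∈ s then P j else 1) with hKs
      have hQsymm : Q.IsSymm := by
        apply KK_isSymm
        intro j
        by_cases hji : j = i
        · subst hji; simp [Function.update_self, (hP j).1]
        · simp [Function.update_of_ne hji, Matrix.isSymm_one]
      have hQidem : Q * Q = Q := by
        rw [hQ, KK_mul]
        refine congrArg KK (funext fun j => ?_)
        by_cases hji : j = i
        · subst hji; simp [Function.update_self, (hP j).2]
        · simp [Function.update_of_ne hji]
      have step1 : vecNorm ((KK (fun j => if j ∈ insert i s then P j else 1)).mulVec a - a)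
          ≤ vecNorm (Ks.mulVec a - a) + vecNorm (Q.mulVec a - a) := by
        have tri := vecNorm_sub_le ((Q * Ks).mulVec a) (Q.mulVec a) a
        rw [hKprod]
        refine le_trans tri ?_
        have : (Q * Ks).mulVec a - Q.mulVec a = Q.mulVec (Ks.mulVec a - a) := by
          rw [← Matrix.mulVec_mulVec, ← Matrix.mulVec_sub]
        rw [this]
        have hc := contraction Q hQsymm hQidem (Ks.mulVec a - a)
        linarith
      rw [Finset.sum_insert hi]
      refine le_trans step1 ?_
      have := ih
      linarith

section Digits

variable {n : ℕ}

lemma nat_digit_ext (hn : 0 < n) : ∀ (t u v : ℕ), u < n ^ t → v < n ^ t →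
    (∀ e, e < t → u / n ^ e % n = v / n ^ e % n) → u = v
  | 0, u, v, hu, hv, _ => by
      rw [pow_zero] at hu hv; omega
  | t + 1, u, v, hu, hv, h => by
      have h0 : u % n = v % n := by
        have := h 0 (Nat.succ_pos t)
        simpa using this
      have hd : u / n = v / n := by
        apply nat_digit_ext hn t
        · exact Nat.div_lt_of_lt_mul (by rw [← pow_succ']; exact hu)
        · exact Nat.div_lt_of_lt_mul (by rw [← pow_succ']; exact hv)
        · intro e he
          have heq := h (e + 1) (by omega)
          rw [Nat.div_div_eq_div_mul, Nat.div_div_eq_div_mul, ← pow_succ']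
          exact heq
      have e1 := Nat.div_add_mod u n
      have e2 := Nat.div_add_mod v n
      rw [← e1, ← e2, hd, h0]

lemma mod_pow_digit (hn : 0 < n) (x e t : ℕ) (he : e < t) :
    x % n ^ t / n ^ e % n = x / n ^ e % n := by
  have key : ∀ a b : ℕ, (n ^ t * a + b) / n ^ e % n = b / n ^ e % n := by
    intro a b
    have ht : n ^ t = n ^ e * n ^ (t - e) := by rw [← pow_add]; congr 1; omega
    rw [ht, mul_assoc, Nat.mul_add_div (pow_pos hn e)]
    have h2 : n ^ (t - e) = n * n ^ (t - e - 1) := by rw [← pow_succ']; congr 1; omega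
    rw [h2, mul_assoc, Nat.mul_add_mod]
  have := key (x / n ^ t) (x % n ^ t)
  rw [Nat.div_add_mod] at this
  exact this.symm

/-- The base-`n` digits of `x : Fin (n^q)`, with digit `i` being the coefficient of
`n^(q-1-i)` (big-endian). -/
def dig (hn : 0 < n) (q : ℕ) (x : Fin (n ^ q)) : Fin q → Fin n :=
  fun i => ⟨(x : ℕ) / n ^ (q - 1 - (i : ℕ)) % n, Nat.mod_lt _ hn⟩

lemma dig_injective (hn : 0 < n) (q : ℕ) : Function.Injective (dig hn q) := by
  intro x y h
  apply Fin.ext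
  apply nat_digit_ext hn q _ _ x.isLt y.isLt
  intro e he
  have h2 := congrArg Fin.val (congrFun h ⟨q - 1 - e, by omega⟩)
  simpa [dig, show q - 1 - (q - 1 - e) = e by omega] using h2

noncomputable def digEquiv (hn : 0 < n) (q : ℕ) : Fin (n ^ q) ≃ (Fin q → Fin n) :=
  Equiv.ofBijective (dig hn q)
    ((Fintype.bijective_iff_injective_and_card _).mpr
      ⟨dig_injective hn q, by simp [Fintype.card_fun]⟩)

lemma digEquiv_apply (hn : 0 < n) (q : ℕ) (x : Fin (n ^ q)) :
    digEquiv hn q x = dig hn q x := rfl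

lemma bigKron_apply (hn : 0 < n) (p : ℕ) (P : Fin p → Matrix (Fin n) (Fin n) ℝ)
    (x y : Fin (n ^ p)) :
    bigKron p P x y = ∏ j, P j (dig hn p x j) (dig hn p y j) := by
  induction p with
  | zero =>
      have hx : (x : ℕ) < 1 := by simpa using x.isLt
      have hy : (y : ℕ) < 1 := by simpa using y.isLt
      have hxy : x = y := Fin.ext (by omega)
      subst hxy
      show (1 : Matrix (Fin (n ^ 0)) (Fin (n ^ 0)) ℝ) x x = _
      simp [Matrix.one_apply_eq]
  | succ p ih =>
      have hdig0 : ∀ (z : Fin (n ^ (p + 1))),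
          (((finCongr (pow_succ' n p).symm).symm z)).divNat = dig hn (p + 1) z 0 := by
        intro z
        apply Fin.ext
        have hlt : (z : ℕ) / n ^ p < n :=
          Nat.div_lt_of_lt_mul (by rw [← pow_succ]; exact z.isLt)
        simp only [Fin.coe_divNat, finCongr_symm, finCongr_apply, Fin.coe_cast, dig,
          Fin.val_zero, Nat.sub_zero, Nat.add_sub_cancel]
        exact (Nat.mod_eq_of_lt hlt).symm
      have hdig1 : ∀ (z : Fin (n ^ (p + 1))) (j : Fin p),
          dig hn p (((finCongr (pow_succ' n p).symm).symm z).modNat) j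
            = dig hn (p + 1) z j.succ := by
        intro z j
        apply Fin.ext
        simp only [dig, Fin.coe_modNat, finCongr_symm, finCongr_apply, Fin.coe_cast,
          Fin.val_succ]
        rw [mod_pow_digit hn _ _ _ (by omega)]
        rw [show p - 1 - (j : ℕ) = p + 1 - 1 - ((j : ℕ) + 1) from by omega]
      rw [bigKron, Matrix.reindex_apply, Matrix.submatrix_apply]
      show finKron (P 0) (bigKron p fun i => P i.succ) _ _ = _
      rw [finKron, Matrix.of_apply, Fin.prod_univ_succ]
      congr 1
      · rw [hdig0 x, hdig0 y]
      · rw [ih]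
        exact Finset.prod_congr rfl fun j _ => by rw [hdig1 x, hdig1 y]

end Digits

section Entries

variable {n : ℕ}

noncomputable def ent (hn : 0 < n) {q : ℕ} (F : Fin q → Matrix (Fin n) (Fin n) ℝ)
    (x y : Fin (n ^ q)) (e : ℕ) : ℝ :=
  if he : e < q then F ⟨e, he⟩ (dig hn q x ⟨e, he⟩) (dig hn q y ⟨e, he⟩) else 1

lemma KK_dig (hn : 0 < n) {q : ℕ} (F : Fin q → Matrix (Fin n) (Fin n) ℝ) (x y : Fin (n ^ q)) :
    KK F (dig hn q x) (dig hn q y) = ∏ e ∈ Finset.range q, ent hn F x y e := by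
  rw [KK_apply, ← Fin.prod_univ_eq_prod_range (ent hn F x y) q]
  exact Finset.prod_congr rfl fun i _ => by simp [ent, i.isLt]

lemma one_apply_digits (hn : 0 < n) (t : ℕ) (u v : Fin (n ^ t)) :
    (1 : Matrix (Fin (n ^ t)) (Fin (n ^ t)) ℝ) u v
      = ∏ e ∈ Finset.range t,
          if (u : ℕ) / n ^ e % n = (v : ℕ) / n ^ e % n then (1 : ℝ) else 0 := by
  rw [Finset.prod_boole, Matrix.one_apply]
  refine if_congr ⟨?_, ?_⟩ rfl rfl
  · rintro rfl e _; rfl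
  · intro h
    exact Fin.ext (nat_digit_ext hn t _ _ u.isLt v.isLt
      fun e he => h e (Finset.mem_range.2 he))

lemma entryL (hn : 0 < n) {p q : ℕ} (hp : 0 < p) (hpq : p ≤ q)
    (P : Fin p → Matrix (Fin n) (Fin n) ℝ)
    (h : n ^ q = n ^ p * n ^ (q - p)) (z w : Fin (n ^ p * n ^ (q - p))) :
    finKron (bigKron p P) (1 : Matrix (Fin (n ^ (q - p))) (Fin (n ^ (q - p))) ℝ) z w
      = KK (fun i : Fin q => if hi : (i : ℕ) < p then P ⟨i, hi⟩ else 1)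
          (dig hn q (Fin.cast h.symm z)) (dig hn q (Fin.cast h.symm w)) := by
  set F : Fin q → Matrix (Fin n) (Fin n) ℝ :=
    fun i => if hi : (i : ℕ) < p then P ⟨i, hi⟩ else 1 with hF
  set x := Fin.cast h.symm z with hx
  set y := Fin.cast h.symm w with hy
  have hxz : (x : ℕ) = (z : ℕ) := rfl
  have hyw : (y : ℕ) = (w : ℕ) := rfl
  rw [KK_dig]
  rw [show Finset.range q = Finset.range (p + (q - p)) from by congr 1; omega]
  rw [Finset.prod_range_add]
  rw [finKron, Matrix.of_apply]
  congr 1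
  · rw [bigKron_apply hn, ← Fin.prod_univ_eq_prod_range]
    refine Finset.prod_congr rfl fun j _ => ?_
    have hjq : (j : ℕ) < q := by omega
    have hFj : F ⟨(j : ℕ), hjq⟩ = P j := by
      show (if hi : (j : ℕ) < p then P ⟨(j : ℕ), hi⟩ else 1) = P j
      rw [dif_pos j.isLt, Fin.eta]
    have hent : ent hn F x y (j : ℕ)
        = P j (dig hn q x ⟨j, hjq⟩) (dig hn q y ⟨j, hjq⟩) := by
      rw [ent, dif_pos hjq, hFj]
    rw [hent]
    have hdigd : ∀ (u : Fin (n ^ q)) (v : Fin (n ^ p * n ^ (q - p))), (u : ℕ) = (v : ℕ) →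
        dig hn p v.divNat j = dig hn q u ⟨j, hjq⟩ := by
      intro u v huv
      apply Fin.ext
      simp only [dig, Fin.coe_divNat, huv]
      rw [show q - 1 - (j : ℕ) = q - p + (p - 1 - (j : ℕ)) from by omega, pow_add,
        ← Nat.div_div_eq_div_mul]
    rw [hdigd x z hxz, hdigd y w hyw]
  · rw [one_apply_digits hn]
    conv_lhs => rw [← Finset.prod_range_reflect]
    refine Finset.prod_congr rfl fun e he => ?_
    have he' : e < q - p := Finset.mem_range.1 he
    have hi : p + e < q := by omega
    have hent : ent hn F x y (p + e)
        = if dig hn q x ⟨p + e, hi⟩ = dig hn q y ⟨p + e, hi⟩ then (1 : ℝ) else 0 := by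
      rw [ent, dif_pos hi]
      have hFi : F ⟨p + e, hi⟩ = 1 := by
        show (if hi' : p + e < p then P ⟨p + e, hi'⟩ else 1) = 1
        rw [dif_neg (by omega)]
      rw [hFi, Matrix.one_apply]
    rw [hent]
    have hdm : ∀ (u : Fin (n ^ q)) (v : Fin (n ^ p * n ^ (q - p))), (u : ℕ) = (v : ℕ) →
        ((dig hn q u ⟨p + e, hi⟩ : ℕ)) = (v.modNat : ℕ) / n ^ (q - p - 1 - e) % n := by
      intro u v huv
      simp only [dig, Fin.coe_modNat]
      rw [mod_pow_digit hn _ _ _ (show q - p - 1 - e < q - p from by omega), ← huv,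
        show q - 1 - (p + e) = q - p - 1 - e from by omega]
    refine if_congr ?_ rfl rfl
    rw [Fin.ext_iff, hdm x z hxz, hdm y w hyw]

lemma entryR (hn : 0 < n) {q : ℕ} (j : ℕ) (hj : j < q) (M : Matrix (Fin n) (Fin n) ℝ)
    (h : n ^ q = n ^ j * n * n ^ (q - j - 1)) (z w : Fin (n ^ j * n * n ^ (q - j - 1))) :
    finKron (finKron (1 : Matrix (Fin (n ^ j)) (Fin (n ^ j)) ℝ) M)
        (1 : Matrix (Fin (n ^ (q - j - 1))) (Fin (n ^ (q - j - 1))) ℝ) z w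
      = KK (Function.update (fun _ => (1 : Matrix (Fin n) (Fin n) ℝ)) (⟨j, hj⟩ : Fin q) M)
          (dig hn q (Fin.cast h.symm z)) (dig hn q (Fin.cast h.symm w)) := by
  set F := Function.update (fun _ => (1 : Matrix (Fin n) (Fin n) ℝ)) (⟨j, hj⟩ : Fin q) M
    with hF
  set x := Fin.cast h.symm z with hx
  set y := Fin.cast h.symm w with hy
  have hxz : (x : ℕ) = (z : ℕ) := rfl
  have hyw : (y : ℕ) = (w : ℕ) := rfl
  rw [KK_dig]
  rw [show Finset.range q = Finset.range ((j + 1) + (q - j - 1)) from by congr 1; omega]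
  rw [Finset.prod_range_add, Finset.prod_range_succ]
  rw [finKron, Matrix.of_apply, finKron, Matrix.of_apply]
  congr 1
  congr 1
  · -- high identity block
    rw [one_apply_digits hn]
    conv_lhs => rw [← Finset.prod_range_reflect]
    refine Finset.prod_congr rfl fun e he => ?_
    have he' : e < j := Finset.mem_range.1 he
    have hiq : e < q := by omega
    have hent : ent hn F x y e
        = if dig hn q x ⟨e, hiq⟩ = dig hn q y ⟨e, hiq⟩ then (1 : ℝ) else 0 := by
      rw [ent, dif_pos hiq]
      have hFi : F ⟨e, hiq⟩ = 1 := by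
        rw [hF, Function.update_of_ne (Fin.ne_of_val_ne (show e ≠ j from by omega))]
      rw [hFi, Matrix.one_apply]
    rw [hent]
    have hdd : ∀ (u : Fin (n ^ q)) (v : Fin (n ^ j * n * n ^ (q - j - 1))),
        (u : ℕ) = (v : ℕ) →
        ((dig hn q u ⟨e, hiq⟩ : ℕ)) = (v.divNat.divNat : ℕ) / n ^ (j - 1 - e) % n := by
      intro u v huv
      simp only [dig, Fin.coe_divNat, huv]
      have hmm : n ^ (q - j - 1) * (n * n ^ (j - 1 - e)) = n ^ (q - 1 - e) := by
        rw [← pow_succ', ← pow_add]; congr 1; omega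
      rw [Nat.div_div_eq_div_mul, Nat.div_div_eq_div_mul, hmm]
    refine if_congr ?_ rfl rfl
    rw [Fin.ext_iff, hdd x z hxz, hdd y w hyw]
  · -- middle block
    have hent : ent hn F x y j
        = M (dig hn q x ⟨j, hj⟩) (dig hn q y ⟨j, hj⟩) := by
      rw [ent, dif_pos hj]
      have hFi : F ⟨j, hj⟩ = M := by rw [hF, Function.update_self]
      rw [hFi]
    rw [hent]
    have hdm : ∀ (u : Fin (n ^ q)) (v : Fin (n ^ j * n * n ^ (q - j - 1))),
        (u : ℕ) = (v : ℕ) → v.divNat.modNat = dig hn q u ⟨j, hj⟩ := by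
      intro u v huv
      apply Fin.ext
      simp only [dig, Fin.coe_modNat, Fin.coe_divNat, huv]
      rw [show q - 1 - j = q - j - 1 from by omega]
    rw [hdm x z hxz, hdm y w hyw]
  · -- low identity block
    rw [one_apply_digits hn]
    conv_lhs => rw [← Finset.prod_range_reflect]
    refine Finset.prod_congr rfl fun e he => ?_
    have he' : e < q - j - 1 := Finset.mem_range.1 he
    have hiq : j + 1 + e < q := by omega
    have hent : ent hn F x y (j + 1 + e)
        = if dig hn q x ⟨j + 1 + e, hiq⟩ = dig hn q y ⟨j + 1 + e, hiq⟩
          then (1 : ℝ) else 0 := by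
      rw [ent, dif_pos hiq]
      have hFi : F ⟨j + 1 + e, hiq⟩ = 1 := by
        rw [hF, Function.update_of_ne (Fin.ne_of_val_ne (show j + 1 + e ≠ j from by omega))]
      rw [hFi, Matrix.one_apply]
    rw [hent]
    have hdm : ∀ (u : Fin (n ^ q)) (v : Fin (n ^ j * n * n ^ (q - j - 1))),
        (u : ℕ) = (v : ℕ) →
        ((dig hn q u ⟨j + 1 + e, hiq⟩ : ℕ))
          = (v.modNat : ℕ) / n ^ (q - j - 1 - 1 - e) % n := by
      intro u v huv
      simp only [dig, Fin.coe_modNat]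
      rw [mod_pow_digit hn _ _ _ (show q - j - 1 - 1 - e < q - j - 1 from by omega), ← huv,
        show q - 1 - (j + 1 + e) = q - j - 1 - 1 - e from by omega]
    refine if_congr ?_ rfl rfl
    rw [Fin.ext_iff, hdm x z hxz, hdm y w hyw]

end Entries

section Transport

lemma transport {ι₁ ι₂ : Type*} [Fintype ι₁] [Fintype ι₂] (e : ι₁ ≃ ι₂)
    (M : Matrix ι₂ ι₂ ℝ) (b : ι₂ → ℝ) :
    vecNorm ((M.submatrix e e).mulVec (b ∘ e) - b ∘ e) = vecNorm (M.mulVec b - b) := by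
  rw [Matrix.submatrix_mulVec_equiv]
  have h1 : (b ∘ e) ∘ (e.symm : ι₂ → ι₁) = b := by funext i; simp
  rw [h1]
  have h2 : (M.mulVec b) ∘ e - b ∘ e = (M.mulVec b - b) ∘ e := rfl
  rw [h2]
  unfold vecNorm vecNormSq
  congr 1
  exact Fintype.sum_equiv e _ _ fun i => rfl

variable {n : ℕ}

lemma normL (hn : 0 < n) {p q : ℕ} (hp : 0 < p) (hpq : p ≤ q)
    (P : Fin p → Matrix (Fin n) (Fin n) ℝ) (a : Fin (n ^ q) → ℝ)
    (h : n ^ q = n ^ p * n ^ (q - p)) :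
    vecNorm ((finKron (bigKron p P)
          (1 : Matrix (Fin (n ^ (q - p))) (Fin (n ^ (q - p))) ℝ)).mulVec
        (castVec h a) - castVec h a)
      = vecNorm ((KK (fun i : Fin q => if hi : (i : ℕ) < p then P ⟨i, hi⟩ else 1)).mulVec
          (a ∘ (digEquiv hn q).symm) - a ∘ (digEquiv hn q).symm) := by
  set F : Fin q → Matrix (Fin n) (Fin n) ℝ :=
    fun i => if hi : (i : ℕ) < p then P ⟨i, hi⟩ else 1 with hF
  set b : (Fin q → Fin n) → ℝ := a ∘ (digEquiv hn q).symm with hb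
  set GG := (finCongr h.symm).trans (digEquiv hn q) with hGG
  have hM : finKron (bigKron p P) (1 : Matrix (Fin (n ^ (q - p))) (Fin (n ^ (q - p))) ℝ)
      = (KK F).submatrix GG GG := by
    ext z w
    rw [Matrix.submatrix_apply]
    exact entryL hn hp hpq P h z w
  have hv : castVec h a = b ∘ GG := by
    funext i
    show a (Fin.cast h.symm i) = a ((digEquiv hn q).symm (GG i))
    congr 1
    rw [show GG i = digEquiv hn q (Fin.cast h.symm i) from rfl, Equiv.symm_apply_apply]
  rw [hM, hv, transport]

lemma normR (hn : 0 < n) {q : ℕ} (j : ℕ) (hj : j < q) (M : Matrix (Fin n) (Fin n) ℝ)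
    (a : Fin (n ^ q) → ℝ) (h : n ^ q = n ^ j * n * n ^ (q - j - 1)) :
    vecNorm ((finKron (finKron (1 : Matrix (Fin (n ^ j)) (Fin (n ^ j)) ℝ) M)
          (1 : Matrix (Fin (n ^ (q - j - 1))) (Fin (n ^ (q - j - 1))) ℝ)).mulVec
        (castVec h a) - castVec h a)
      = vecNorm ((KK (Function.update (fun _ => (1 : Matrix (Fin n) (Fin n) ℝ))
            (⟨j, hj⟩ : Fin q) M)).mulVec
          (a ∘ (digEquiv hn q).symm) - a ∘ (digEquiv hn q).symm) := by
  set F := Function.update (fun _ => (1 : Matrix (Fin n) (Fin n) ℝ)) (⟨j, hj⟩ : Fin q) M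
    with hF
  set b : (Fin q → Fin n) → ℝ := a ∘ (digEquiv hn q).symm with hb
  set GG := (finCongr h.symm).trans (digEquiv hn q) with hGG
  have hM : finKron (finKron (1 : Matrix (Fin (n ^ j)) (Fin (n ^ j)) ℝ) M)
        (1 : Matrix (Fin (n ^ (q - j - 1))) (Fin (n ^ (q - j - 1))) ℝ)
      = (KK F).submatrix GG GG := by
    ext z w
    rw [Matrix.submatrix_apply]
    exact entryR hn j hj M h z w
  have hv : castVec h a = b ∘ GG := by
    funext i
    show a (Fin.cast h.symm i) = a ((digEquiv hn q).symm (GG i))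
    congr 1
    rw [show GG i = digEquiv hn q (Fin.cast h.symm i) from rfl, Equiv.symm_apply_apply]
  rw [hM, hv, transport]

end Transport

lemma vecNorm_zero_of_card {m : ℕ} (hm : m = 0) (v : Fin m → ℝ) : vecNorm v = 0 := by
  subst hm
  unfold vecNorm vecNormSq
  simp

lemma sum_fin_restrict {p q : ℕ} (hpq : p ≤ q) (f : Fin q → ℝ)
    (h0 : ∀ i : Fin q, p ≤ (i : ℕ) → f i = 0) :
    ∑ i, f i = ∑ j : Fin p, f (Fin.castLE hpq j) := by
  classical
  set TT : ℕ → ℝ := fun e => if he : e < q then f ⟨e, he⟩ else 0 with hTT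
  have h1 : ∑ i, f i = ∑ e ∈ Finset.range q, TT e := by
    rw [← Fin.sum_univ_eq_sum_range TT q]
    exact Finset.sum_congr rfl fun i _ => by simp [hTT, i.isLt]
  have h2 : ∑ j : Fin p, f (Fin.castLE hpq j) = ∑ e ∈ Finset.range p, TT e := by
    rw [← Fin.sum_univ_eq_sum_range TT p]
    refine Finset.sum_congr rfl fun j _ => ?_
    have hjq : (j : ℕ) < q := by omega
    simp only [hTT, dif_pos hjq]
    rfl
  rw [h1, h2, show Finset.range q = Finset.range (p + (q - p)) from by congr 1; omega,
    Finset.sum_range_add]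
  have h3 : ∀ e ∈ Finset.range (q - p), TT (p + e) = 0 := by
    intro e he
    have he' : e < q - p := Finset.mem_range.1 he
    by_cases hq : p + e < q
    · simp only [hTT, dif_pos hq]
      exact h0 _ (Nat.le_add_right p e)
    · simp only [hTT, dif_neg hq]
  rw [Finset.sum_eq_zero h3, add_zero]

end S16

open S16

/-- For orthogonal projections `P¹, …, P^p ∈ ℝ^{n×n}` and `a ∈ ℝ^{n^q}` (`1 ≤ p ≤ q`),
`‖(P¹ ⊗ ⋯ ⊗ P^p ⊗ I_{n^{q−p}})a − a‖₂ ≤ Σ_{m=1}^p ‖(I_{n^{m−1}} ⊗ P^m ⊗ I_{n^{q−m}})a − a‖₂`.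
Here `P j` (for `j : Fin p`) is the projection `P^{j+1}`. -/
theorem stmt16 {n p q : ℕ} (hp : 0 < p) (hpq : p ≤ q)
    (P : Fin p → Matrix (Fin n) (Fin n) ℝ)
    (hproj : ∀ j, (P j).IsSymm ∧ P j * P j = P j)
    (a : Fin (n ^ q) → ℝ) :
    vecNorm
        ((finKron (bigKron p P) (1 : Matrix (Fin (n ^ (q - p))) (Fin (n ^ (q - p))) ℝ)).mulVec
            (castVec (show n ^ q = n ^ p * n ^ (q - p) by
              rw [← pow_add]; congr 1; omega) a)
          - castVec (show n ^ q = n ^ p * n ^ (q - p) by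
              rw [← pow_add]; congr 1; omega) a) ≤
      ∑ j : Fin p,
        vecNorm
          ((finKron
              (finKron (1 : Matrix (Fin (n ^ (j : ℕ))) (Fin (n ^ (j : ℕ))) ℝ) (P j))
              (1 : Matrix (Fin (n ^ (q - (j : ℕ) - 1))) (Fin (n ^ (q - (j : ℕ) - 1))) ℝ)).mulVec
              (castVec (show n ^ q = n ^ (j : ℕ) * n * n ^ (q - (j : ℕ) - 1) by
                rw [← pow_succ, ← pow_add]; congr 1; omega) a)
            - castVec (show n ^ q = n ^ (j : ℕ) * n * n ^ (q - (j : ℕ) - 1) by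
                rw [← pow_succ, ← pow_add]; congr 1; omega) a) := by
  rcases Nat.eq_zero_or_pos n with hn0 | hn
  · subst hn0
    refine le_trans (le_of_eq (vecNorm_zero_of_card ?_ _))
      (Finset.sum_nonneg fun j _ => vecNorm_nonneg _)
    rw [zero_pow hp.ne', zero_mul]
  · have hFproj : ∀ i : Fin q,
        ((fun i : Fin q => if hi : (i : ℕ) < p then P ⟨i, hi⟩ else 1) i).IsSymm ∧
          (fun i : Fin q => if hi : (i : ℕ) < p then P ⟨i, hi⟩ else 1) i *
            (fun i : Fin q => if hi : (i : ℕ) < p then P ⟨i, hi⟩ else 1) i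
            = (fun i : Fin q => if hi : (i : ℕ) < p then P ⟨i, hi⟩ else 1) i := by
      intro i
      by_cases hi : (i : ℕ) < p
      · have hv : (fun i : Fin q => if hi : (i : ℕ) < p then P ⟨i, hi⟩ else 1) i
            = P ⟨i, hi⟩ := dif_pos hi
        rw [hv]
        exact hproj _
      · have hv : (fun i : Fin q => if hi : (i : ℕ) < p then P ⟨i, hi⟩ else 1) i
            = 1 := dif_neg hi
        rw [hv]
        exact ⟨Matrix.isSymm_one, one_mul 1⟩
    have key := abstract_ineq (fun i : Fin q => if hi : (i : ℕ) < p then P ⟨i, hi⟩ else 1)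
      hFproj (a ∘ (digEquiv hn q).symm) Finset.univ
    have huniv : (fun i : Fin q => if i ∈ (Finset.univ : Finset (Fin q)) then
          (fun i : Fin q => if hi : (i : ℕ) < p then P ⟨i, hi⟩ else 1) i else 1)
        = fun i : Fin q => if hi : (i : ℕ) < p then P ⟨i, hi⟩ else 1 := by
      funext i; simp
    rw [huniv] at key
    rw [normL hn hp hpq P a]
    refine le_trans key (le_of_eq ?_)
    have hT0 : ∀ i : Fin q, p ≤ (i : ℕ) →
        vecNorm ((KK (Function.update (fun _ => (1 : Matrix (Fin n) (Fin n) ℝ)) i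
            ((fun i : Fin q => if hi : (i : ℕ) < p then P ⟨i, hi⟩ else 1) i))).mulVec
          (a ∘ (digEquiv hn q).symm) - a ∘ (digEquiv hn q).symm) = 0 := by
      intro i hi
      have hFi : (fun i : Fin q => if hi : (i : ℕ) < p then P ⟨i, hi⟩ else 1) i = 1 :=
        dif_neg (by omega)
      rw [hFi]
      rw [show Function.update (fun _ : Fin q => (1 : Matrix (Fin n) (Fin n) ℝ)) i 1
          = fun _ => 1 from Function.update_eq_self i (fun _ => 1)]
      rw [KK_one, Matrix.one_mulVec, sub_self, vecNorm_zero]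
    rw [sum_fin_restrict hpq _ hT0]
    refine Finset.sum_congr rfl fun j _ => ?_
    have hjq : (j : ℕ) < q := by omega
    rw [normR hn (j : ℕ) hjq (P j) a]
    have hFj : (fun i : Fin q => if hi : (i : ℕ) < p then P ⟨i, hi⟩ else 1)
        (Fin.castLE hpq j) = P j := by
      show (if hi : (j : ℕ) < p then P ⟨(j : ℕ), hi⟩ else 1) = P j
      rw [dif_pos j.isLt, Fin.eta]
    rw [hFj]
    rfl
end
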